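/- arXiv:2001.01154 — 2 statements merged into one kernel-verified Lean document; each statement's English description precedes it below -/
import Mathlib

section
/- Thin-triangle cosine lemma, hyperbolic case (Lemma 2.2, k < 0). Let X be a metric space, let γ : [0,T] → X and η : [0,S] → X be unit-speed geodesics with γ(0) = η(0), let κ > 0, and fix s ∈ (0, S]. Set d(t) := dist(γ(t), η(s)) and let cθ(t) := (cosh(t·√κ)·cosh(s·√κ) − cosh(d(t)·√κ)) / (sinh(t·√κ)·sinh(s·√κ)), which by the hyperbolic law of cosines is the cosine of the comparison angle at γ(0) in the hyperbolic plane of curvature −κ. Then lim_{t→0⁺} | cθ(t) − (s − d(t))/t | = 0. -/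
open Filter Topology Metric Set

noncomputable section

/-- `γ` is a unit-speed geodesic (shortest path) on the interval `[0, T]`:
the distance between any two of its points equals the parameter difference. -/
def IsUnitSpeedGeodesicOn {X : Type*} [MetricSpace X] (γ : ℝ → X) (T : ℝ) : Prop :=
  ∀ t ∈ Set.Icc (0:ℝ) T, ∀ t' ∈ Set.Icc (0:ℝ) T, dist (γ t) (γ t') = |t - t'|

/-- The Euclidean comparison angle `∠⁰_p(x, y)` at the vertex `p`. -/
def compAngle {X : Type*} [MetricSpace X] (p x y : X) : ℝ :=
  Real.arccos ((dist p x ^ 2 + dist p y ^ 2 - dist x y ^ 2) /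
    (2 * dist p x * dist p y))

/-- The upper angle `∠⁺(γ, η)` between two geodesics with `γ 0 = η 0`:
the limsup of comparison angles `∠⁰_{γ 0}(γ t, η s)` as `(t, s) → (0⁺, 0⁺)`. -/
def upperAngle {X : Type*} [MetricSpace X] (γ η : ℝ → X) : ℝ :=
  Filter.limsup (fun ts : ℝ × ℝ => compAngle (γ 0) (γ ts.1) (η ts.2))
    ((𝓝[>] (0:ℝ)) ×ˢ (𝓝[>] (0:ℝ)))

/-- The lower angle `∠⁻(γ, η)`: liminf of comparison angles. -/
def lowerAngle {X : Type*} [MetricSpace X] (γ η : ℝ → X) : ℝ :=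
  Filter.liminf (fun ts : ℝ × ℝ => compAngle (γ 0) (γ ts.1) (η ts.2))
    ((𝓝[>] (0:ℝ)) ×ˢ (𝓝[>] (0:ℝ)))

/-- `U` is a region of curvature bounded by `0` in the comparison sense, where
`rel` is `≤` (curvature `≤ 0`) or `≥` (curvature `≥ 0`): any two points of `U`
are joined by a unit-speed shortest path with image in `U`, and for every
geodesic triangle contained in `U` and every Euclidean comparison triangle,
distances between pairs of points on the sides are related by `rel` to the
distances between the corresponding comparison points. -/
def IsCurvRegion {X : Type*} [MetricSpace X] (rel : ℝ → ℝ → Prop) (U : Set X) : Prop :=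
  (∀ x ∈ U, ∀ y ∈ U, ∃ γ : ℝ → X, IsUnitSpeedGeodesicOn γ (dist x y) ∧
    γ 0 = x ∧ γ (dist x y) = y ∧ ∀ t ∈ Set.Icc (0:ℝ) (dist x y), γ t ∈ U) ∧
  (∀ x ∈ U, ∀ y ∈ U, ∀ z ∈ U, ∀ p : Fin 3 → ℝ → X,
    (∀ i, IsUnitSpeedGeodesicOn (p i) (![dist x y, dist x z, dist y z] i) ∧
      p i 0 = (![(x, y), (x, z), (y, z)] i).1 ∧
      p i (![dist x y, dist x z, dist y z] i) = (![(x, y), (x, z), (y, z)] i).2 ∧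
      ∀ t ∈ Set.Icc (0:ℝ) (![dist x y, dist x z, dist y z] i), p i t ∈ U) →
    ∀ xb yb zb : EuclideanSpace ℝ (Fin 2),
      dist xb yb = dist x y → dist xb zb = dist x z → dist yb zb = dist y z →
      ∀ i j : Fin 3, ∀ a b : ℝ,
        a ∈ Set.Icc (0:ℝ) (![dist x y, dist x z, dist y z] i) →
        b ∈ Set.Icc (0:ℝ) (![dist x y, dist x z, dist y z] j) →
        rel (dist (p i a) (p j b))
          (dist
            (![fun c : ℝ => AffineMap.lineMap xb yb (c / dist x y),
               fun c : ℝ => AffineMap.lineMap xb zb (c / dist x z),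
               fun c : ℝ => AffineMap.lineMap yb zb (c / dist y z)] i a)
            (![fun c : ℝ => AffineMap.lineMap xb yb (c / dist x y),
               fun c : ℝ => AffineMap.lineMap xb zb (c / dist x z),
               fun c : ℝ => AffineMap.lineMap yb zb (c / dist y z)] j b)))

/-- A region of curvature `≤ 0`. -/
def IsCurvLeRegion {X : Type*} [MetricSpace X] (U : Set X) : Prop :=
  IsCurvRegion (· ≤ ·) U

/-- A region of curvature `≥ 0`. -/
def IsCurvGeRegion {X : Type*} [MetricSpace X] (U : Set X) : Prop :=
  IsCurvRegion (· ≥ ·) U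

end

/-! With `a = √κ`, `x = t a`, `y = s a` and `z = d(t) a`, the triangle inequality gives
`|z - y| ≤ x`. Writing `z = y + w` and expanding `cosh z = cosh y cosh w + sinh y sinh w`, the
error `cθ(t) - (s - d(t)) / t` splits into `coth y · (cosh x - cosh w) / sinh x`, at most
`coth y · sinh x`, and `(w / x · sinh x - sinh w) / sinh x`, at most `2 (cosh x - 1)` because
`u ↦ sinh u - u` is odd and increasing. Both bounds are continuous in `t` and vanish at
`t = 0`. -/

open Real

namespace Real

lemma sinh_le_mul_cosh {x : ℝ} (hx : 0 ≤ x) : sinh x ≤ x * cosh x := by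
  rcases hx.eq_or_lt with rfl | hx
  · simp
  obtain ⟨c, ⟨hc0, hcx⟩, hslope⟩ := exists_hasDerivAt_eq_slope sinh cosh hx
    continuous_sinh.continuousOn fun y _ => hasDerivAt_sinh y
  rw [sinh_zero, sub_zero, sub_zero, eq_div_iff hx.ne'] at hslope
  have hcosh : cosh c ≤ cosh x := by
    rw [cosh_le_cosh, abs_of_pos hc0, abs_of_pos hx]
    exact hcx.le
  nlinarith

lemma abs_cosh_sub_cosh_le_sinh_sq {w x : ℝ} (hw : |w| ≤ x) :
    |cosh x - cosh w| ≤ sinh x ^ 2 := by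
  have hle : cosh w ≤ cosh x := cosh_le_cosh.mpr (hw.trans (le_abs_self x))
  have h1 : 1 ≤ cosh w := one_le_cosh w
  rw [abs_of_nonneg (sub_nonneg.mpr hle), sinh_sq]
  nlinarith

lemma abs_sinh_sub_div_mul_sinh_le {w x : ℝ} (hx : 0 < x) (hw : |w| ≤ x) :
    |sinh w - w / x * sinh x| ≤ 2 * (sinh x - x) := by
  obtain ⟨hxw, hwx⟩ := abs_le.mp hw
  have hodd : |sinh w - w| ≤ sinh x - x := by
    have lower := sinh_sub_id_strictMono.monotone hxw
    have upper := sinh_sub_id_strictMono.monotone hwx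
    simp only [sinh_neg] at lower upper
    exact abs_le.mpr ⟨by linarith, upper⟩
  have hlin : |w - w / x * sinh x| ≤ sinh x - x := by
    have hgap : 0 ≤ sinh x - x := sub_nonneg.mpr (self_le_sinh_iff.mpr hx.le)
    have hwx1 : |w / x| ≤ 1 := by rwa [abs_div, abs_of_pos hx, div_le_one hx]
    calc |w - w / x * sinh x| = |w / x| * (sinh x - x) := by
          rw [abs_sub_comm, ← abs_of_nonneg hgap, ← abs_mul]
          congr 1
          field_simp
      _ ≤ sinh x - x := mul_le_of_le_one_left hgap hwx1
  calc |sinh w - w / x * sinh x| ≤ |sinh w - w| + |w - w / x * sinh x| := abs_sub_le _ _ _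
    _ ≤ 2 * (sinh x - x) := by linarith

/-- The comparison cosine of the hyperbolic law of cosines in curvature `-1`; curvature `-κ` is
reached by scaling all side lengths by `√κ`. -/
noncomputable def hyperbolicCosAngle (a b c : ℝ) : ℝ :=
  (cosh a * cosh b - cosh c) / (sinh a * sinh b)

lemma abs_hyperbolicCosAngle_sub_le {x y z : ℝ} (hx : 0 < x) (hy : 0 < y) (hz : |z - y| ≤ x) :
    |hyperbolicCosAngle x y z - (y - z) / x| ≤ cosh y / sinh y * sinh x + 2 * (cosh x - 1) := by
  set w := z - y
  have hsx : 0 < sinh x := sinh_pos_iff.mpr hx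
  have hsy : 0 < sinh y := sinh_pos_iff.mpr hy
  have hsplit : hyperbolicCosAngle x y z - (y - z) / x =
      cosh y / sinh y * ((cosh x - cosh w) / sinh x) - (sinh w - w / x * sinh x) / sinh x := by
    rw [hyperbolicCosAngle, show z = y + w by ring, cosh_add]
    field_simp
    ring
  have hquad : |(cosh x - cosh w) / sinh x| ≤ sinh x := by
    rw [abs_div, abs_of_pos hsx, div_le_iff₀ hsx, ← sq]
    exact abs_cosh_sub_cosh_le_sinh_sq hz
  have hlin : |(sinh w - w / x * sinh x) / sinh x| ≤ 2 * (cosh x - 1) := by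
    have hsinh := sinh_le_mul_cosh hx.le
    have hxs := self_le_sinh_iff.mpr hx.le
    rw [abs_div, abs_of_pos hsx, div_le_iff₀ hsx]
    refine (abs_sinh_sub_div_mul_sinh_le hx hz).trans ?_
    nlinarith [one_le_cosh x]
  rw [hsplit]
  calc _ ≤ |cosh y / sinh y * ((cosh x - cosh w) / sinh x)|
          + |(sinh w - w / x * sinh x) / sinh x| := abs_sub _ _
    _ = cosh y / sinh y * |(cosh x - cosh w) / sinh x|
          + |(sinh w - w / x * sinh x) / sinh x| := by
        rw [abs_mul, abs_of_pos (div_pos (cosh_pos y) hsy)]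
    _ ≤ cosh y / sinh y * sinh x + 2 * (cosh x - 1) := by gcongr

end Real

lemma IsUnitSpeedGeodesicOn.dist_zero {X : Type*} [MetricSpace X] {γ : ℝ → X} {T t : ℝ}
    (hγ : IsUnitSpeedGeodesicOn γ T) (ht : t ∈ Icc 0 T) : dist (γ 0) (γ t) = t := by
  rw [hγ 0 ⟨le_rfl, ht.1.trans ht.2⟩ t ht, zero_sub, abs_neg, abs_of_nonneg ht.1]

lemma IsUnitSpeedGeodesicOn.abs_dist_sub_le {X : Type*} [MetricSpace X] {γ η : ℝ → X}
    {T S t s : ℝ} (hγ : IsUnitSpeedGeodesicOn γ T) (hη : IsUnitSpeedGeodesicOn η S)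
    (hγη : γ 0 = η 0) (ht : t ∈ Icc 0 T) (hs : s ∈ Icc 0 S) :
    |dist (γ t) (η s) - s| ≤ t := by
  have h := _root_.abs_dist_sub_le (γ t) (γ 0) (η s)
  rwa [dist_comm (γ t) (γ 0), hγ.dist_zero ht, hγη, hη.dist_zero hs] at h

/-- Lemma 2.2, hyperbolic case (`k = -κ < 0`): the thin-triangle cosine lemma. -/
theorem thinTriangle_cosine_hyperbolic {X : Type*} [MetricSpace X]
    {T S : ℝ} (hT : 0 < T)
    (γ η : ℝ → X)
    (hγ : IsUnitSpeedGeodesicOn γ T) (hη : IsUnitSpeedGeodesicOn η S)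
    (hγη : γ 0 = η 0)
    {κ : ℝ} (hκ : 0 < κ)
    {s : ℝ} (hs : s ∈ Set.Ioc (0:ℝ) S) :
    Filter.Tendsto
      (fun t : ℝ =>
        |(Real.cosh (t * Real.sqrt κ) * Real.cosh (s * Real.sqrt κ)
            - Real.cosh (dist (γ t) (η s) * Real.sqrt κ))
            / (Real.sinh (t * Real.sqrt κ) * Real.sinh (s * Real.sqrt κ))
          - (s - dist (γ t) (η s)) / t|)
      (𝓝[>] (0:ℝ)) (𝓝 0) := by
  have ha : 0 < √κ := sqrt_pos.mpr hκ
  set bound : ℝ → ℝ := fun t =>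
    cosh (s * √κ) / sinh (s * √κ) * sinh (t * √κ) + 2 * (cosh (t * √κ) - 1)
  have hbound : Tendsto bound (𝓝[>] 0) (𝓝 0) := by
    have hcont : Continuous bound := by fun_prop
    simpa [bound] using (hcont.tendsto 0).mono_left nhdsWithin_le_nhds
  refine squeeze_zero' (.of_forall fun t => abs_nonneg _) ?_ hbound
  filter_upwards [Ioc_mem_nhdsGT hT] with t ⟨ht0, htT⟩
  have hd := hγ.abs_dist_sub_le hη hγη ⟨ht0.le, htT⟩ (Ioc_subset_Icc_self hs)
  rw [← mul_div_mul_right _ t ha.ne', sub_mul]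
  refine abs_hyperbolicCosAngle_sub_le (mul_pos ht0 ha) (mul_pos hs.1 ha) ?_
  rw [← sub_mul, abs_mul, abs_of_pos ha]
  gcongr
end

section
/- Strong upper angle lemma (Lemma 2.3). Let X be a metric space and let γ : [0,T] → X and η : [0,S] → X be unit-speed geodesics with γ(0) = η(0). Then for every fixed s ∈ (0, S], limsup_{t→0⁺} ∠⁰_{γ(0)}(γ(t), η(s)) ≤ ∠⁺(γ, η). -/
open Filter Topology Metric Set

/-
For small `t`, with `c = d(γ t, η r)`, the cosine of `∠⁰_{γ 0}(γ t, η r)` is `(r - c) / t` up to an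
error at most `t / (2r)`, and `r ↦ r - d(γ t, η r)` is nondecreasing by the triangle inequality.
Hence a bound `∠⁰(γ t, η s') ≤ a` for all small `t`, at one `s' < s` close to `0`, propagates to
`∠⁰(γ t, η s) ≤ arccos (cos a - t / (2 s'))`, whose limit as `t → 0⁺` is `a`; the definition of
`∠⁺` supplies such an `s'` for every `a > ∠⁺(γ, η)`.
-/

open Real

section CompCos

variable {X : Type*} [MetricSpace X]

noncomputable def compCos (p x y : X) : ℝ :=
  (dist p x ^ 2 + dist p y ^ 2 - dist x y ^ 2) / (2 * dist p x * dist p y)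

theorem compAngle_eq_arccos_compCos (p x y : X) : compAngle p x y = arccos (compCos p x y) := rfl

theorem compAngle_nonneg (p x y : X) : 0 ≤ compAngle p x y := arccos_nonneg _

theorem compAngle_le_pi (p x y : X) : compAngle p x y ≤ π := arccos_le_pi _

theorem compCos_mem_Icc {p x y : X} (hx : p ≠ x) (hy : p ≠ y) : compCos p x y ∈ Icc (-1) 1 := by
  have hu := dist_pos.2 hx
  have hv := dist_pos.2 hy
  have hxy := dist_triangle x p y
  have hpx := dist_triangle p y x
  have hpy := dist_triangle p x y
  rw [dist_comm x p] at hxy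
  rw [dist_comm y x] at hpx
  unfold compCos
  constructor
  · rw [le_div_iff₀ (by positivity)]
    nlinarith [mul_self_le_mul_self dist_nonneg hxy]
  · rw [div_le_one (by positivity)]
    nlinarith [mul_nonneg (sub_nonneg.2 hpx) (sub_nonneg.2 hpy)]

theorem sub_div_le_compCos {p x y : X} (hx : p ≠ x) (hy : p ≠ y) :
    (dist p y - dist x y) / dist p x ≤ compCos p x y := by
  have hu := dist_pos.2 hx
  have hv := dist_pos.2 hy
  have hc := abs_le.1 (abs_dist_sub_le p x y)
  unfold compCos
  rw [div_le_div_iff₀ hu (by positivity)]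
  nlinarith [mul_nonneg hu.le (mul_nonneg (sub_nonneg.2 hc.2) (neg_le_iff_add_nonneg.1 hc.1))]

theorem compCos_le_sub_div_add {p x y : X} (hx : p ≠ x) (hy : p ≠ y) :
    compCos p x y ≤ (dist p y - dist x y) / dist p x + dist p x / (2 * dist p y) := by
  have hu := dist_pos.2 hx
  have hv := dist_pos.2 hy
  have hc := abs_le.1 (abs_dist_sub_le p x y)
  unfold compCos
  rw [div_add_div _ _ hu.ne' (by positivity), div_le_div_iff₀ (by positivity) (by positivity)]
  nlinarith [mul_nonneg (mul_nonneg hu.le hv.le) (sq_nonneg (dist p y - dist x y))]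

end CompCos

theorem cos_le_of_arccos_le {x a : ℝ} (hx : x ∈ Icc (-1) 1) (ha : a ≤ π) (h : arccos x ≤ a) :
    cos a ≤ x := by
  simpa [cos_arccos hx.1 hx.2] using cos_le_cos_of_nonneg_of_le_pi (arccos_nonneg x) ha h

namespace IsUnitSpeedGeodesicOn

variable {X : Type*} [MetricSpace X] {γ : ℝ → X} {T : ℝ}

theorem dist_apply_zero (hγ : IsUnitSpeedGeodesicOn γ T) {t : ℝ} (ht : t ∈ Icc 0 T) :
    dist (γ 0) (γ t) = t := by
  rw [hγ 0 ⟨le_rfl, ht.1.trans ht.2⟩ t ht, zero_sub, abs_neg, abs_of_nonneg ht.1]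

theorem monotoneOn_sub_dist (hγ : IsUnitSpeedGeodesicOn γ T) (x : X) :
    MonotoneOn (fun r => r - dist x (γ r)) (Icc 0 T) := by
  intro r hr r' hr' hrr'
  have := dist_triangle x (γ r) (γ r')
  rw [hγ r hr r' hr', abs_sub_comm, abs_of_nonneg (sub_nonneg.2 hrr')] at this
  dsimp only
  linarith

end IsUnitSpeedGeodesicOn

section Geodesics

variable {X : Type*} [MetricSpace X] {T S : ℝ} {γ η : ℝ → X}

theorem compCos_sub_le_compCos (hγ : IsUnitSpeedGeodesicOn γ T) (hη : IsUnitSpeedGeodesicOn η S)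
    (hγη : γ 0 = η 0) {t s' s : ℝ} (ht : t ∈ Ioc 0 T) (hs' : 0 < s') (hs's : s' ≤ s)
    (hs : s ≤ S) :
    compCos (γ 0) (γ t) (η s') - t / (2 * s') ≤ compCos (γ 0) (γ t) (η s) := by
  have hγt := hγ.dist_apply_zero (Ioc_subset_Icc_self ht)
  have hηr : ∀ r ∈ Icc 0 S, dist (γ 0) (η r) = r := fun r hr => hγη ▸ hη.dist_apply_zero hr
  have hs'mem : s' ∈ Icc 0 S := ⟨hs'.le, hs's.trans hs⟩
  have hsmem : s ∈ Icc 0 S := ⟨hs'.le.trans hs's, hs⟩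
  have hne : ∀ r ∈ Icc 0 S, 0 < r → γ 0 ≠ η r := fun r hr hr0 =>
    dist_pos.1 (by rw [hηr r hr]; exact hr0)
  have hγ0 : γ 0 ≠ γ t := dist_pos.1 (by rw [hγt]; exact ht.1)
  have hmono := hη.monotoneOn_sub_dist (γ t) hs'mem hsmem hs's
  have hup := compCos_le_sub_div_add hγ0 (hne s' hs'mem hs')
  have hlow := sub_div_le_compCos hγ0 (hne s hsmem (hs'.trans_le hs's))
  rw [hγt, hηr s' hs'mem] at hup
  rw [hγt, hηr s hsmem] at hlow
  have hdiv : (s' - dist (γ t) (η s')) / t ≤ (s - dist (γ t) (η s)) / t :=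
    div_le_div_of_nonneg_right hmono ht.1.le
  linarith

theorem limsup_compAngle_le_of_eventually_le (hT : 0 < T) (hγ : IsUnitSpeedGeodesicOn γ T)
    (hη : IsUnitSpeedGeodesicOn η S) (hγη : γ 0 = η 0) {s' s a : ℝ} (hs' : 0 < s')
    (hs's : s' ≤ s) (hs : s ≤ S) (ha0 : 0 ≤ a) (haπ : a ≤ π)
    (h : ∀ᶠ t in 𝓝[>] 0, compAngle (γ 0) (γ t) (η s') ≤ a) :
    limsup (fun t => compAngle (γ 0) (γ t) (η s)) (𝓝[>] 0) ≤ a := by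
  have hbound : ∀ᶠ t in 𝓝[>] 0,
      compAngle (γ 0) (γ t) (η s) ≤ arccos (cos a - t / (2 * s')) := by
    filter_upwards [h, Ioc_mem_nhdsGT hT] with t hθ ht
    have hγ0 : γ 0 ≠ γ t := dist_pos.1 <| by
      rw [hγ.dist_apply_zero (Ioc_subset_Icc_self ht)]; exact ht.1
    have hη0 : γ 0 ≠ η s' := dist_pos.1 <| by
      rw [hγη, hη.dist_apply_zero ⟨hs'.le, hs's.trans hs⟩]; exact hs'
    rw [compAngle_eq_arccos_compCos] at hθ ⊢
    have hcos := cos_le_of_arccos_le (compCos_mem_Icc hγ0 hη0) haπ hθ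
    exact arccos_le_arccos <|
      (sub_le_sub_right hcos _).trans (compCos_sub_le_compCos hγ hη hγη ht hs' hs's hs)
  have hlim : Tendsto (fun t => arccos (cos a - t / (2 * s'))) (𝓝[>] 0) (𝓝 a) :=
    ((continuous_arccos.comp (continuous_const.sub (continuous_id.div_const _))).tendsto' 0 a
      (by simp [arccos_cos ha0 haπ])).mono_left nhdsWithin_le_nhds
  calc limsup (fun t => compAngle (γ 0) (γ t) (η s)) (𝓝[>] 0)
      ≤ limsup (fun t => arccos (cos a - t / (2 * s'))) (𝓝[>] 0) :=
        limsup_le_limsup hbound (isCoboundedUnder_le_of_le _ fun _ => compAngle_nonneg _ _ _)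
          hlim.isBoundedUnder_le
    _ = a := hlim.limsup_eq

end Geodesics

/-- Lemma 2.3: strong upper angle lemma. -/
theorem limsup_compAngle_le_upperAngle {X : Type*} [MetricSpace X]
    {T S : ℝ} (hT : 0 < T)
    (γ η : ℝ → X)
    (hγ : IsUnitSpeedGeodesicOn γ T) (hη : IsUnitSpeedGeodesicOn η S)
    (hγη : γ 0 = η 0)
    {s : ℝ} (hs : s ∈ Set.Ioc (0:ℝ) S) :
    Filter.limsup (fun t : ℝ => compAngle (γ 0) (γ t) (η s)) (𝓝[>] (0:ℝ))
      ≤ upperAngle γ η := by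
  refine le_of_forall_gt_imp_ge_of_dense fun b hb => ?_
  have hev : ∀ᶠ ts in 𝓝[>] (0:ℝ) ×ˢ 𝓝[>] (0:ℝ),
      compAngle (γ 0) (γ ts.1) (η ts.2) ≤ min b π := by
    filter_upwards [eventually_lt_of_limsup_lt hb
      (isBoundedUnder_of ⟨π, fun _ => compAngle_le_pi _ _ _⟩)] with ts h
    exact le_min h.le (compAngle_le_pi _ _ _)
  obtain ⟨ts, hts⟩ := hev.exists
  have ha0 : 0 ≤ min b π := (compAngle_nonneg _ _ _).trans hts
  obtain ⟨s', hs'good, hs'⟩ :=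
    ((eventually_swap_iff.1 hev).curry.and (Ioo_mem_nhdsGT hs.1)).exists
  calc limsup (fun t => compAngle (γ 0) (γ t) (η s)) (𝓝[>] 0)
      ≤ min b π := limsup_compAngle_le_of_eventually_le hT hγ hη hγη hs'.1 hs'.2.le hs.2 ha0
        (min_le_right _ _) hs'good
    _ ≤ b := min_le_left _ _
end
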